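/- arXiv:1909.03796 — 3 statements merged into one kernel-verified Lean document; each statement's English description precedes it below -/
import Mathlib

section
/- (Proposition 1, level part.) Suppose ν_1, ..., ν_n are independent real-valued random variables, each with an atomless (continuous) distribution, and each symmetric: ν_i has the same distribution as −ν_i for every 1 ≤ i ≤ n. Then for every n ∈ ℕ, the sign-flipping test that rejects when T_1^n > T^n_{[1−α]} has rejection probability at most α. -/
/-!
Write `T = (T_1, ..., T_w)`. Replacing `ν_i` by `g_{j i} ν_i` and, for every other row `k ≠ 1, j`,
`g_{k i}` by `g_{k i} g_{j i}` preserves the joint law of all the variables (conditionally on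
row `j`, it changes the signs of symmetric independent variables), and it exchanges `T_1` and `T_j`
while fixing the other `T_k`. Hence each `T_j` has the same probability of exceeding at least
`K = ⌈(1 - α) w⌉` of the others. Since at most `w - K` indices can do so at the same time, this
probability is at most `(w - K) / w ≤ α`.
-/

open MeasureTheory ProbabilityTheory Filter
open scoped ENNReal NNReal

/-- The `k`-th smallest value (1-indexed) among `T 0, ..., T (w-1)`. -/
noncomputable def orderStat {w : ℕ} (T : Fin w → ℝ) (k : ℕ) : ℝ :=
  if h : k - 1 < w then T (Tuple.sort T ⟨k - 1, h⟩) else 0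

noncomputable def signLaw : Measure ℝ :=
  (2 : ℝ≥0∞)⁻¹ • Measure.dirac (-1) + (2 : ℝ≥0∞)⁻¹ • Measure.dirac 1

section StrictRank

open Finset

variable {ι α : Type*} [Fintype ι] [LinearOrder α]

def strictRank (f : ι → α) (j : ι) : ℕ := #{k | f k < f j}

theorem card_filter_comp_perm (σ : Equiv.Perm ι) (p : ι → Prop) [DecidablePred p] :
    #{k | p (σ k)} = #{k | p k} := by
  simp only [card_filter]
  exact Equiv.sum_comp σ fun k => if p k then 1 else 0

theorem card_filter_le_strictRank_le (f : ι → α) (K : ℕ) :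
    #{j | K ≤ strictRank f j} ≤ Fintype.card ι - K := by
  classical
  set B : Finset ι := {j | K ≤ strictRank f j}
  rcases B.eq_empty_or_nonempty with hB | hB
  · simp [hB]
  obtain ⟨j₀, hj₀, hmin⟩ := B.exists_min_image f hB
  have hdisj : Disjoint B ({k | f k < f j₀} : Finset ι) :=
    disjoint_filter.mpr fun k _ hk hlt =>
      (hmin k (mem_filter.mpr ⟨mem_univ k, hk⟩)).not_gt hlt
  have hK : K ≤ #{k | f k < f j₀} := (mem_filter.mp hj₀).2
  have hcard : #B + #{k | f k < f j₀} ≤ Fintype.card ι :=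
    (card_union_of_disjoint hdisj).symm.trans_le (card_le_univ _)
  omega

theorem Monotone.lt_iff_le_card_filter_lt {w : ℕ} {g : Fin w → α} (hg : Monotone g)
    (m : Fin w) (c : α) : g m < c ↔ (m : ℕ) + 1 ≤ #{i | g i < c} := by
  constructor
  · intro hm
    calc (m : ℕ) + 1 = #(Iic m) := (Fin.card_Iic m).symm
      _ ≤ #{i | g i < c} := card_le_card fun i hi =>
          mem_filter.mpr ⟨mem_univ i, (hg (mem_Iic.mp hi)).trans_lt hm⟩
  · intro hcard
    by_contra! hm
    have hsub : ({i | g i < c} : Finset (Fin w)) ⊆ Iio m := fun i hi =>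
      mem_Iio.mpr <| lt_of_not_ge fun hmi =>
        ((mem_filter.mp hi).2.trans_le (hm.trans (hg hmi))).false
    have := (card_le_card hsub).trans_eq (Fin.card_Iio m)
    omega

theorem orderStat_lt_iff_le_strictRank {w K : ℕ} (f : Fin w → ℝ) (hK : 1 ≤ K) (hKw : K ≤ w)
    (j : Fin w) : orderStat f K < f j ↔ K ≤ strictRank f j := by
  have hK' : K - 1 < w := by omega
  rw [orderStat, dif_pos hK', ← Function.comp_apply (f := f),
    (Tuple.monotone_sort f).lt_iff_le_card_filter_lt]
  simp only [Function.comp_apply, card_filter_comp_perm (Tuple.sort f) (f · < f j), strictRank]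
  omega

theorem measurableSet_le_strictRank (K : ℕ) (j : ι) :
    MeasurableSet {f : ι → ℝ | K ≤ strictRank f j} := by
  have : Measurable fun f : ι → ℝ => strictRank f j := by
    simp only [strictRank, card_filter]
    exact Finset.measurable_sum _ fun k _ => Measurable.ite
      (measurableSet_lt (measurable_pi_apply k) (measurable_pi_apply j))
      measurable_const measurable_const
  exact this measurableSet_Ici

theorem card_mul_measure_le_strictRank_le {Ω : Type*} [MeasurableSpace Ω] [DecidableEq ι]
    (P : Measure Ω) [IsProbabilityMeasure P] (T : Ω → ι → ℝ) (hT : Measurable T) (i₀ : ι)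
    (hT_exch : ∀ j, P.map (fun ω => T ω ∘ Equiv.swap i₀ j) = P.map T) (K : ℕ) :
    Fintype.card ι * P {ω | K ≤ strictRank (T ω) i₀} ≤ (Fintype.card ι - K : ℕ) := by
  let A : ι → Set Ω := fun j => {ω | K ≤ strictRank (T ω) j}
  have hA_meas : ∀ j, MeasurableSet (A j) := fun j => hT (measurableSet_le_strictRank K j)
  have hA : ∀ j, P (A j) = P (A i₀) := by
    intro j
    have hσ : Measurable fun ω => T ω ∘ Equiv.swap i₀ j :=
      measurable_pi_lambda _ fun k => (measurable_pi_apply _).comp hT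
    have hpre : A j = (fun ω => T ω ∘ Equiv.swap i₀ j) ⁻¹' {f | K ≤ strictRank f i₀} := by
      ext ω
      simp only [A, strictRank, Set.mem_ofPred_eq, Set.mem_preimage, Function.comp_apply,
        Equiv.swap_apply_left, card_filter_comp_perm (Equiv.swap i₀ j) (T ω · < T ω j)]
    rw [hpre, ← Measure.map_apply hσ (measurableSet_le_strictRank K i₀), hT_exch,
      Measure.map_apply hT (measurableSet_le_strictRank K i₀)]
    rfl
  have hcount : ∀ ω, ∑ j, (A j).indicator 1 ω ≤ ((Fintype.card ι - K : ℕ) : ℝ≥0∞) := by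
    intro ω
    simp only [Set.indicator_apply, Pi.one_apply, A, Set.mem_ofPred_eq, sum_boole]
    exact_mod_cast card_filter_le_strictRank_le (T ω) K
  calc (Fintype.card ι : ℝ≥0∞) * P (A i₀) = ∑ j, P (A j) := by simp [hA]
    _ = ∫⁻ ω, ∑ j, (A j).indicator 1 ω ∂P := by
        rw [lintegral_finsetSum _ fun j _ => measurable_one.indicator (hA_meas j)]
        simp only [lintegral_indicator_one (hA_meas _)]
    _ ≤ ∫⁻ _, ((Fintype.card ι - K : ℕ) : ℝ≥0∞) ∂P := lintegral_mono hcount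
    _ = (Fintype.card ι - K : ℕ) := by simp

end StrictRank

theorem measurePreserving_const_mul_of_sign {μ : Measure ℝ} {c : ℝ}
    (hc : c = 1 ∨ c = -1) (hμ : μ.map Neg.neg = μ) : MeasurePreserving (c * ·) μ μ := by
  rcases hc with rfl | rfl
  · simp only [one_mul]
    exact MeasurePreserving.id μ
  · simp only [neg_one_mul]
    exact ⟨measurable_neg, hμ⟩

/-- Given the untouched coordinates (`κ t = none`), the map changes the signs of some of the other,
symmetric, coordinates; the skew-product principle turns this into invariance of `Measure.pi μ`. -/
theorem measurePreserving_pi_mul {S : Type*} [Fintype S] (μ : S → Measure ℝ)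
    [∀ s, IsProbabilityMeasure (μ s)] (κ : S → Option S)
    (hκ : ∀ s t, κ s = some t → κ t = none)
    (hsign : ∀ s t, κ s = some t → ∀ᵐ y ∂μ t, y = 1 ∨ y = -1)
    (hsymm : ∀ s t, κ s = some t → (μ s).map Neg.neg = μ s) :
    MeasurePreserving (fun x s => (κ s).elim 1 x * x s) (Measure.pi μ) (Measure.pi μ) := by
  classical
  let p : S → Prop := fun s => κ s = none
  let e := MeasurableEquiv.piEquivPiSubtypeProd (fun _ => ℝ) p
  have he := measurePreserving_piEquivPiSubtypeProd μ p
  let G : (Subtype p → ℝ) → ({s // ¬p s} → ℝ) → ({s // ¬p s} → ℝ) :=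
    fun d y s => (κ s).elim 1 (e.symm (d, 0)) * y s
  have hG_meas : Measurable (Function.uncurry G) := by
    refine measurable_pi_lambda _ fun s =>
      Measurable.mul ?_ ((measurable_pi_apply s).comp measurable_snd)
    cases κ s with
    | none => exact measurable_const
    | some t =>
      exact (measurable_pi_apply t).comp
        (e.symm.measurable.comp (measurable_fst.prodMk measurable_const))
  have hG : ∀ᵐ d ∂Measure.pi (fun t : Subtype p => μ t),
      (Measure.pi fun s : {s // ¬p s} => μ s).map (G d) =
        Measure.pi fun s : {s // ¬p s} => μ s := by
    refine (ae_all_iff.mpr fun s : {s // ¬p s} => ?_).mono fun d hd =>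
      (measurePreserving_pi _ _ hd).map_eq
    obtain ⟨t, ht⟩ := Option.ne_none_iff_exists'.mp s.2
    have het : ∀ d, e.symm (d, 0) t = d ⟨t, hκ s t ht⟩ := fun d => by
      simp [e, MeasurableEquiv.piEquivPiSubtypeProd_symm_apply, hκ s t ht, p]
    simp only [ht, Option.elim_some, het]
    filter_upwards
      [(Measure.tendsto_eval_ae_ae (i := ⟨t, hκ s t ht⟩)).eventually (hsign s t ht)] with d hd
    exact measurePreserving_const_mul_of_sign hd (hsymm s t ht)
  have hskew :=
    (MeasurePreserving.id (Measure.pi fun t : Subtype p => μ t)).skew_product hG_meas hG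
  have hconj : (fun x s => (κ s).elim 1 x * x s) =
      e.symm ∘ (fun z => (id z.1, G z.1 z.2)) ∘ e := by
    funext x s
    rcases hs : κ s with _ | t
    · simp [e, G, MeasurableEquiv.piEquivPiSubtypeProd_symm_apply, p, hs]
    · simp [e, G, MeasurableEquiv.piEquivPiSubtypeProd_symm_apply, p, hs, hκ s t hs]
  rw [hconj]
  exact (MeasurePreserving.symm e he).comp (hskew.comp he)

instance : IsProbabilityMeasure signLaw :=
  ⟨by simp [signLaw, ENNReal.inv_two_add_inv_two]⟩

theorem ae_signLaw : ∀ᵐ y ∂signLaw, y = 1 ∨ y = -1 := by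
  simp [signLaw, ae_dirac_eq]

theorem map_neg_signLaw : signLaw.map Neg.neg = signLaw := by
  simp [signLaw, Measure.map_add _ _ measurable_neg, Measure.map_smul,
    Measure.map_dirac' measurable_neg, add_comm]

section SignFlip

variable {n w : ℕ}

/-- The coordinates `inl i` and `inr (j, i)` of `x` stand for `ν_i` and `g_{j i}`, and
`signFlipStat x j` is the statistic `T_{j+1}^n`. -/
noncomputable def signFlipStat (x : Fin n ⊕ Fin w × Fin n → ℝ) (j : Fin w) : ℝ :=
  (Real.sqrt n)⁻¹ * ∑ i, x (.inr (j, i)) * x (.inl i)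

theorem measurable_signFlipStat : Measurable (signFlipStat (n := n) (w := w)) := by
  unfold signFlipStat
  fun_prop

variable [NeZero w]

def flipByRow (j₀ : Fin w) : Fin n ⊕ Fin w × Fin n → Option (Fin n ⊕ Fin w × Fin n)
  | .inl i => some (.inr (j₀, i))
  | .inr (j, i) => if j = 0 ∨ j = j₀ then none else some (.inr (j₀, i))

theorem flipByRow_eq_some {j₀ : Fin w} {s t : Fin n ⊕ Fin w × Fin n}
    (h : flipByRow j₀ s = some t) :
    ∃ i, t = .inr (j₀, i) ∧ (s = .inl i ∨ ∃ j, j ≠ 0 ∧ s = .inr (j, i)) := by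
  rcases s with i | ⟨j, i⟩
  · exact ⟨i, (Option.some_injective _ h).symm, .inl rfl⟩
  · simp only [flipByRow] at h
    split_ifs at h with hj
    exact ⟨i, (Option.some_injective _ h).symm, .inr ⟨j, fun h0 => hj (.inl h0), rfl⟩⟩

theorem signFlipStat_flipByRow (j₀ : Fin w) {x : Fin n ⊕ Fin w × Fin n → ℝ}
    (hx₀ : ∀ i, x (.inr (0, i)) = 1)
    (hx : ∀ i, x (.inr (j₀, i)) = 1 ∨ x (.inr (j₀, i)) = -1) :
    signFlipStat (fun s => (flipByRow j₀ s).elim 1 x * x s) =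
      signFlipStat x ∘ Equiv.swap 0 j₀ := by
  funext j
  simp only [signFlipStat, Function.comp_apply]
  congr 1
  refine Finset.sum_congr rfl fun i _ => ?_
  rcases hx i with h | h <;> by_cases h0 : j = 0 <;> by_cases h1 : j = j₀ <;>
    simp_all [flipByRow, Equiv.swap_apply_of_ne_of_ne]

theorem map_signFlipStat_comp_swap (μ : Fin n ⊕ Fin w × Fin n → Measure ℝ)
    [∀ s, IsProbabilityMeasure (μ s)] (hν : ∀ i, (μ (.inl i)).map Neg.neg = μ (.inl i))
    (hg₀ : ∀ i, μ (.inr (0, i)) = Measure.dirac 1)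
    (hg : ∀ j, j ≠ 0 → ∀ i, μ (.inr (j, i)) = signLaw) (j₀ : Fin w) :
    (Measure.pi μ).map (fun x => signFlipStat x ∘ Equiv.swap 0 j₀) =
      (Measure.pi μ).map signFlipStat := by
  have hsign : ∀ i, ∀ᵐ y ∂μ (.inr (j₀, i)), y = 1 ∨ y = -1 := by
    intro i
    by_cases hj₀ : j₀ = 0
    · subst hj₀
      simp [hg₀, ae_dirac_eq]
    · rw [hg j₀ hj₀]
      exact ae_signLaw
  have hflip : MeasurePreserving (fun x s => (flipByRow j₀ s).elim 1 x * x s)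
      (Measure.pi μ) (Measure.pi μ) := by
    refine measurePreserving_pi_mul μ (flipByRow j₀) ?_ ?_ ?_
    · intro s t h
      obtain ⟨i, rfl, -⟩ := flipByRow_eq_some h
      simp [flipByRow]
    · intro s t h
      obtain ⟨i, rfl, -⟩ := flipByRow_eq_some h
      exact hsign i
    · intro s t h
      obtain ⟨i, -, rfl | ⟨j, hj, rfl⟩⟩ := flipByRow_eq_some h
      · exact hν i
      · rw [hg j hj i]
        exact map_neg_signLaw
  have hae : ∀ᵐ x ∂Measure.pi μ,
      (∀ i, x (.inr (0, i)) = 1) ∧ ∀ i, x (.inr (j₀, i)) = 1 ∨ x (.inr (j₀, i)) = -1 := by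
    refine (ae_all_iff.mpr fun i => ?_).and (ae_all_iff.mpr fun i => ?_)
    · have h₁ : ∀ᵐ y ∂μ (.inr (0, i)), y = 1 := by simp [hg₀, ae_dirac_eq]
      exact Measure.tendsto_eval_ae_ae.eventually h₁
    · exact Measure.tendsto_eval_ae_ae.eventually (hsign i)
  calc (Measure.pi μ).map (fun x => signFlipStat x ∘ Equiv.swap 0 j₀)
      = (Measure.pi μ).map (signFlipStat ∘ fun x s => (flipByRow j₀ s).elim 1 x * x s) :=
        Measure.map_congr (hae.mono fun x hx => (signFlipStat_flipByRow j₀ hx.1 hx.2).symm)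
    _ = (Measure.pi μ).map signFlipStat := by
        rw [← Measure.map_map measurable_signFlipStat hflip.measurable, hflip.map_eq]

theorem map_signFlipStat_comp_swap_of_iIndepFun {Ω : Type*} [MeasurableSpace Ω]
    (P : Measure Ω) [IsProbabilityMeasure P] (ν : Fin n → Ω → ℝ) (g : Fin w → Fin n → Ω → ℝ)
    (hν_meas : ∀ i, Measurable (ν i))
    (hν_symm : ∀ i, P.map (fun ω => -ν i ω) = P.map (ν i))
    (hg_meas : ∀ j i, Measurable (g j i)) (hg0 : ∀ i ω, g 0 i ω = 1)
    (hg_law : ∀ j : Fin w, j ≠ 0 → ∀ i, P.map (g j i) = signLaw)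
    (hindep : iIndepFun (Sum.elim ν fun p : Fin w × Fin n => g p.1 p.2) P) (j₀ : Fin w) :
    P.map (fun ω => signFlipStat (fun s => Sum.elim ν (fun p => g p.1 p.2) s ω) ∘
        Equiv.swap 0 j₀) =
      P.map fun ω => signFlipStat fun s => Sum.elim ν (fun p => g p.1 p.2) s ω := by
  set F := Sum.elim ν fun p : Fin w × Fin n => g p.1 p.2
  have hF : ∀ s, Measurable (F s) := by
    rintro (i | ⟨j, i⟩)
    exacts [hν_meas i, hg_meas j i]
  have : ∀ s, IsProbabilityMeasure (P.map (F s)) := fun s =>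
    Measure.isProbabilityMeasure_map (hF s).aemeasurable
  have hX : Measurable fun ω s => F s ω := measurable_pi_lambda _ hF
  have hσ : Measurable fun x : Fin n ⊕ Fin w × Fin n → ℝ =>
      signFlipStat x ∘ Equiv.swap 0 j₀ :=
    measurable_pi_lambda _ fun k => (measurable_pi_apply _).comp measurable_signFlipStat
  rw [← Function.comp_def (fun x => signFlipStat x ∘ Equiv.swap 0 j₀),
    ← Function.comp_def signFlipStat, ← Measure.map_map hσ hX,
    ← Measure.map_map measurable_signFlipStat hX,
    hindep.map_fun_eq_pi_map fun s => (hF s).aemeasurable]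
  refine map_signFlipStat_comp_swap _ (fun i => ?_) (fun i => ?_) hg_law j₀
  · exact (Measure.map_map measurable_neg (hν_meas i)).trans (hν_symm i)
  · simp [F, show g 0 i = fun _ => 1 from funext (hg0 i)]

end SignFlip

theorem statement6_general
    {Ω : Type*} [MeasureSpace Ω] [IsProbabilityMeasure (ℙ : Measure Ω)]
    (w n : ℕ) [NeZero w] (α : ℝ) (hα : α ∈ Set.Ico (0 : ℝ) 1)
    (ν : Fin n → Ω → ℝ) (g : Fin w → Fin n → Ω → ℝ)
    (hν_meas : ∀ i, Measurable (ν i))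
    (hν_symm : ∀ i, Measure.map (fun ω => -ν i ω) ℙ = Measure.map (ν i) ℙ)
    (hg_meas : ∀ j i, Measurable (g j i))
    (hg0 : ∀ i ω, g 0 i ω = 1)
    (hg_law : ∀ j : Fin w, j ≠ 0 → ∀ i, Measure.map (g j i) ℙ = signLaw)
    (hindep : iIndepFun
      (Sum.elim ν fun p : Fin w × Fin n => g p.1 p.2) ℙ) :
    (ℙ {ω | (Real.sqrt n)⁻¹ * ∑ i : Fin n, g 0 i ω * ν i ω >
        orderStat (fun j : Fin w => (Real.sqrt n)⁻¹ * ∑ i : Fin n, g j i ω * ν i ω)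
          ⌈(1 - α) * (w : ℝ)⌉₊}).toReal ≤ α := by
  obtain ⟨hα₀, hα₁⟩ := hα
  set K := ⌈(1 - α) * (w : ℝ)⌉₊
  have hw : (0 : ℝ) < w := by exact_mod_cast Nat.pos_of_neZero w
  have hK : (1 - α) * w ≤ K := Nat.le_ceil _
  have hK₁ : 1 ≤ K := Nat.one_le_iff_ne_zero.mpr (Nat.ceil_pos.mpr (by nlinarith)).ne'
  have hKw : K ≤ w := Nat.ceil_le.mpr (by nlinarith)
  let T : Ω → Fin w → ℝ := fun ω =>
    signFlipStat fun s => Sum.elim ν (fun p => g p.1 p.2) s ω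
  have hT : Measurable T := measurable_signFlipStat.comp <| measurable_pi_lambda _ <| by
    rintro (i | ⟨j, i⟩)
    exacts [hν_meas i, hg_meas j i]
  have hbound := card_mul_measure_le_strictRank_le ℙ T hT 0
    (map_signFlipStat_comp_swap_of_iIndepFun ℙ ν g hν_meas hν_symm hg_meas hg0 hg_law hindep) K
  have hevent : {ω | (Real.sqrt n)⁻¹ * ∑ i : Fin n, g 0 i ω * ν i ω >
      orderStat (fun j : Fin w => (Real.sqrt n)⁻¹ * ∑ i : Fin n, g j i ω * ν i ω) K} =
      {ω | K ≤ strictRank (T ω) 0} := by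
    ext ω
    exact orderStat_lt_iff_le_strictRank (T ω) hK₁ hKw 0
  rw [hevent]
  have hreal := ENNReal.toReal_mono (by simp) hbound
  rw [Fintype.card_fin, ENNReal.toReal_mul, ENNReal.toReal_natCast, ENNReal.toReal_natCast,
    Nat.cast_sub hKw] at hreal
  nlinarith

/-- **Proposition 1 (level part).** If `ν_1, ..., ν_n` are independent, continuous and
symmetric about `0`, then for every `n` the sign-flipping test that rejects when
`T_1^n > T^n_{[1-α]}` has rejection probability at most `α`. -/
theorem statement6
    {Ω : Type*} [MeasureSpace Ω] [IsProbabilityMeasure (ℙ : Measure Ω)]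
    (w n : ℕ) [NeZero w] (hw : 2 ≤ w) (α : ℝ) (hα : α ∈ Set.Ico (0 : ℝ) 1)
    (ν : Fin n → Ω → ℝ) (g : Fin w → Fin n → Ω → ℝ)
    (hν_meas : ∀ i, Measurable (ν i))
    (hν_atomless : ∀ i, ∀ x : ℝ, Measure.map (ν i) ℙ {x} = 0)
    (hν_symm : ∀ i, Measure.map (fun ω => -ν i ω) ℙ = Measure.map (ν i) ℙ)
    (hg_meas : ∀ j i, Measurable (g j i))
    (hg0 : ∀ i ω, g 0 i ω = 1)
    (hg_law : ∀ j : Fin w, j ≠ 0 → ∀ i, Measure.map (g j i) ℙ = signLaw)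
    (hindep : iIndepFun
      (Sum.elim ν fun p : Fin w × Fin n => g p.1 p.2) ℙ) :
    (ℙ {ω | (Real.sqrt n)⁻¹ * ∑ i : Fin n, g 0 i ω * ν i ω >
        orderStat (fun j : Fin w => (Real.sqrt n)⁻¹ * ∑ i : Fin n, g j i ω * ν i ω)
          ⌈(1 - α) * (w : ℝ)⌉₊}).toReal ≤ α :=
  statement6_general w n α hα ν g hν_meas hν_symm hg_meas hg0 hg_law hindep
end

section
/- (Lemma A.1.) Suppose that for n → ∞ the random vector T^n = (T_1^n, ..., T_w^n) in ℝ^w converges in distribution to a vector T = (T_1, ..., T_w) of independent and identically distributed random variables each having an atomless (continuous) distribution. Then P(T_1^n > T^n_{[1−α]}) → ⌊αw⌋/w as n → ∞. -/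
/-!
Put `k = ⌈(1 - α) w⌉`, so that `w - k = ⌊α w⌋`. The event `{x | x_(k) < x_0}` is open and its
frontier only contains vectors with two equal coordinates, a null set for the i.i.d. atomless
limit law; by the portmanteau theorem the probabilities of the event converge to its limit
probability. Almost surely the limit has no ties, and then exactly `w - k` coordinates exceed
`x_(k)`; since the limit law is exchangeable, the `w` events `{x | x_(k) < x_i}` are equally
likely, so each has probability `(w - k) / w`.
-/

open MeasureTheory ProbabilityTheory Filter
open scoped ENNReal NNReal

/-- Convergence in distribution (weak convergence of laws). -/
def ConvInDist {Ω E : Type*} [MeasureSpace Ω] [TopologicalSpace E] [MeasurableSpace E]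
    (X : ℕ → Ω → E) (μ : Measure E) : Prop :=
  ∀ f : BoundedContinuousFunction E ℝ,
    Tendsto (fun n => ∫ ω, f (X n ω)) atTop (nhds (∫ x, f x ∂μ))

open Finset Topology

section OrderStatistics

variable {w : ℕ}

lemma orderStat_eq_of_monotone (x : Fin w → ℝ) {σ : Equiv.Perm (Fin w)} (hσ : Monotone (x ∘ σ))
    {k : ℕ} (hk : k - 1 < w) : orderStat x k = x (σ ⟨k - 1, hk⟩) := by
  rw [orderStat, dif_pos hk]
  exact (congrFun (Tuple.comp_sort_eq_comp_iff_monotone.2 hσ) _).symm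

lemma orderStat_comp_perm (x : Fin w → ℝ) (σ : Equiv.Perm (Fin w)) (k : ℕ) :
    orderStat (x ∘ σ) k = orderStat x k := by
  unfold orderStat
  split_ifs with h
  · exact congrFun Tuple.comp_perm_comp_sort_eq_comp_sort _
  · rfl

lemma card_filter_comp_perm_s10 {β : Type*} [Fintype β] (p : β → Prop) [DecidablePred p]
    (σ : Equiv.Perm β) : #{r | p (σ r)} = #{i | p i} :=
  card_equiv σ fun r => by simp

lemma orderStat_lt_iff_le_card (x : Fin w → ℝ) {k : ℕ} (hk₁ : 1 ≤ k) (hkw : k ≤ w) (c : ℝ) :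
    orderStat x k < c ↔ k ≤ #{i | x i < c} := by
  set σ := Tuple.sort x
  have hσ : Monotone (x ∘ σ) := Tuple.monotone_sort x
  set r₀ : Fin w := ⟨k - 1, by omega⟩
  have hr₀ : (r₀ : ℕ) = k - 1 := rfl
  rw [orderStat_eq_of_monotone x hσ (by omega), ← card_filter_comp_perm_s10 _ σ]
  constructor
  · intro hc
    have hsub : Iic r₀ ⊆ ({r | x (σ r) < c} : Finset (Fin w)) := fun r hr =>
      mem_filter.2 ⟨mem_univ r, (hσ (mem_Iic.1 hr)).trans_lt hc⟩
    calc k = #(Iic r₀) := by rw [Fin.card_Iic, hr₀]; omega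
      _ ≤ _ := card_le_card hsub
  · contrapose!
    intro hc
    have hsub : ({r | x (σ r) < c} : Finset (Fin w)) ⊆ Iio r₀ := fun r hr =>
      mem_Iio.2 (hσ.reflect_lt ((mem_filter.1 hr).2.trans_le hc))
    calc #{r | x (σ r) < c} ≤ #(Iio r₀) := card_le_card hsub
      _ < k := by rw [Fin.card_Iio, hr₀]; omega

lemma card_orderStat_lt_of_injective {x : Fin w → ℝ} (hx : Function.Injective x) {k : ℕ}
    (hk₁ : 1 ≤ k) (hkw : k ≤ w) : #{i | orderStat x k < x i} = w - k := by
  set σ := Tuple.sort x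
  have hσ : StrictMono (x ∘ σ) :=
    (Tuple.monotone_sort x).strictMono_of_injective (hx.comp σ.injective)
  set r₀ : Fin w := ⟨k - 1, by omega⟩
  have hr₀ : (r₀ : ℕ) = k - 1 := rfl
  have hfilter : ({r | x (σ r₀) < x (σ r)} : Finset (Fin w)) = Ioi r₀ := by
    ext r
    simp only [mem_filter, mem_univ, true_and, mem_Ioi]
    exact hσ.lt_iff_lt
  rw [orderStat_eq_of_monotone x hσ.monotone (by omega), ← card_filter_comp_perm_s10 _ σ, hfilter,
    Fin.card_Ioi, hr₀]
  omega

lemma isOpen_setOf_orderStat_lt {k : ℕ} (hk₁ : 1 ≤ k) (hkw : k ≤ w) (j : Fin w) :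
    IsOpen {x : Fin w → ℝ | orderStat x k < x j} := by
  simp only [orderStat_lt_iff_le_card _ hk₁ hkw]
  refine isOpen_iff_mem_nhds.2 fun x hx => ?_
  have hstable : ∀ᶠ y in 𝓝 x, ∀ i, x i < x j → y i < y j := eventually_all.2 fun i => by
    by_cases h : x i < x j
    · exact ((continuous_apply i).continuousAt.eventually_lt
        (continuous_apply j).continuousAt h).mono fun _ hy _ => hy
    · exact Eventually.of_forall fun _ h' => absurd h' h
  filter_upwards [hstable] with y hy
  exact hx.trans (card_le_card (monotone_filter_right _ fun i _ => hy i))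

lemma frontier_subset_of_eventually_mem_iff {X : Type*} [TopologicalSpace X] {s Z : Set X}
    (h : ∀ x ∉ Z, ∀ᶠ y in 𝓝 x, y ∈ s ↔ x ∈ s) : frontier s ⊆ Z := by
  intro x hx
  by_contra hxZ
  by_cases hxs : x ∈ s
  · exact hx.2 (mem_interior_iff_mem_nhds.2 ((h x hxZ).mono fun y hy => hy.2 hxs))
  · obtain ⟨y, hy, hys⟩ := mem_closure_iff_nhds.1 hx.1 _ ((h x hxZ).mono fun y hy => mt hy.1 hxs)
    exact hy hys

lemma frontier_setOf_orderStat_lt_subset {k : ℕ} (hk₁ : 1 ≤ k) (hkw : k ≤ w) (j : Fin w) :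
    frontier {x : Fin w → ℝ | orderStat x k < x j} ⊆ {x | ¬ Function.Injective x} := by
  refine frontier_subset_of_eventually_mem_iff fun x hx => ?_
  rw [Set.mem_ofPred_eq, not_not] at hx
  have hstable : ∀ᶠ y in 𝓝 x, ∀ i, y i < y j ↔ x i < x j := eventually_all.2 fun i => by
    have hi := (continuous_apply i).continuousAt (x := x)
    have hj := (continuous_apply j).continuousAt (x := x)
    rcases lt_trichotomy (x i) (x j) with h | h | h
    · exact (hi.eventually_lt hj h).mono fun _ hy => iff_of_true hy h
    · simp [hx h]
    · exact (hj.eventually_lt hi h).mono fun _ hy => iff_of_false hy.not_gt h.not_gt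
  filter_upwards [hstable] with y hy
  simp only [orderStat_lt_iff_le_card _ hk₁ hkw, filter_congr fun i _ => hy i]

end OrderStatistics

section ProductMeasure

variable {ι α : Type*} [Fintype ι] [MeasurableSpace α] (m : Measure α)

lemma measurePreserving_comp_perm [SigmaFinite m] (σ : Equiv.Perm ι) :
    MeasurePreserving (fun x : ι → α => x ∘ σ) (Measure.pi fun _ => m)
      (Measure.pi fun _ => m) := by
  convert measurePreserving_piCongrLeft (fun _ : ι => m) σ.symm using 1
  ext x i
  simp [MeasurableEquiv.piCongrLeft, Equiv.piCongrLeft_apply_eq_cast]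

lemma measure_pi_setOf_apply_eq_apply [IsProbabilityMeasure m] [NullSingletonClass m]
    [MeasurableEq α] {i j : ι} (hij : i ≠ j) : Measure.pi (fun _ => m) {x | x i = x j} = 0 := by
  set μ := Measure.pi fun _ : ι => m
  have hind : IndepFun (fun x : ι → α => x i) (fun x => x j) μ :=
    (iIndepFun_pi (X := fun _ : ι => id) fun _ => aemeasurable_id).indepFun hij
  have hlaw : μ.map (fun x => (x i, x j)) = m.prod m := by
    rw [(indepFun_iff_map_prod_eq_prod_map_map (measurable_pi_apply i).aemeasurable
      (measurable_pi_apply j).aemeasurable).1 hind, (measurePreserving_eval _ i).map_eq,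
      (measurePreserving_eval _ j).map_eq]
  have hdiag : MeasurableSet (Set.diagonal α) := measurableSet_diagonal
  calc μ {x | x i = x j} = μ.map (fun x => (x i, x j)) (Set.diagonal α) := by
        rw [Measure.map_apply ((measurable_pi_apply i).prodMk (measurable_pi_apply j)) hdiag]
        rfl
    _ = 0 := by
        rw [hlaw, Measure.prod_apply hdiag]
        simp [Set.preimage, Set.diagonal]

lemma measure_pi_setOf_not_injective [IsProbabilityMeasure m] [NullSingletonClass m]
    [MeasurableEq α] : Measure.pi (fun _ : ι => m) {x | ¬ Function.Injective x} = 0 := by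
  refine measure_mono_null (fun x hx => ?_) (measure_iUnion_null fun i =>
    measure_iUnion_null fun j => measure_iUnion_null fun hij =>
      measure_pi_setOf_apply_eq_apply m (i := i) (j := j) hij)
  obtain ⟨i, j, hxij, hij⟩ := Function.not_injective_iff.1 hx
  exact Set.mem_iUnion₂.2 ⟨i, j, Set.mem_iUnion.2 ⟨hij, hxij⟩⟩

end ProductMeasure

lemma measure_pi_setOf_orderStat_lt {w : ℕ} (m : Measure ℝ) [IsProbabilityMeasure m]
    [NullSingletonClass m] {k : ℕ} (hk₁ : 1 ≤ k) (hkw : k ≤ w) (j : Fin w) :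
    Measure.pi (fun _ => m) {x : Fin w → ℝ | orderStat x k < x j} = (w - k : ℕ) / w := by
  set μ := Measure.pi fun _ : Fin w => m
  set A : Fin w → Set (Fin w → ℝ) := fun i => {x | orderStat x k < x i}
  have hA : ∀ i, MeasurableSet (A i) := fun i =>
    (isOpen_setOf_orderStat_lt hk₁ hkw i).measurableSet
  have hμA : ∀ i, μ (A i) = μ (A j) := fun i => by
    have hpre : A i = (fun x => x ∘ Equiv.swap j i) ⁻¹' A j := by
      ext x
      simp [A, orderStat_comp_perm]
    rw [hpre, (measurePreserving_comp_perm m _).measure_preimage (hA j).nullMeasurableSet]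
  have hcount : ∀ᵐ x ∂μ, ∑ i, (A i).indicator 1 x = ((w - k : ℕ) : ℝ≥0∞) := by
    filter_upwards [ae_iff.2 (measure_pi_setOf_not_injective m)] with x hx
    simp [Set.indicator_apply, A, card_orderStat_lt_of_injective hx hk₁ hkw]
  have hsum : (w : ℝ≥0∞) * μ (A j) = (w - k : ℕ) := calc
    (w : ℝ≥0∞) * μ (A j) = ∑ i, μ (A i) := by simp [hμA]
    _ = ∫⁻ x, ∑ i, (A i).indicator 1 x ∂μ := by
      rw [lintegral_finsetSum _ fun i _ => measurable_one.indicator (hA i)]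
      simp only [lintegral_indicator_one (hA _)]
    _ = (w - k : ℕ) := by simp [lintegral_congr_ae hcount]
  have hw : (w : ℝ≥0∞) ≠ 0 := by exact_mod_cast (show w ≠ 0 by omega)
  exact (ENNReal.eq_div_iff hw (ENNReal.natCast_ne_top w)).2 hsum

lemma ConvInDist.tendsto_measure_preimage {Ω E : Type*} [MeasureSpace Ω]
    [IsProbabilityMeasure (ℙ : Measure Ω)] [TopologicalSpace E] [MeasurableSpace E]
    [OpensMeasurableSpace E] [HasOuterApproxClosed E] {X : ℕ → Ω → E} {μ : Measure E}
    [IsProbabilityMeasure μ] (hX : ConvInDist X μ) (hX_meas : ∀ n, Measurable (X n))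
    {s : Set E} (hs : MeasurableSet s) (hμs : μ (frontier s) = 0) :
    Tendsto (fun n => ℙ (X n ⁻¹' s)) atTop (𝓝 (μ s)) := by
  let P : ℕ → ProbabilityMeasure E := fun n =>
    ⟨(ℙ : Measure Ω).map (X n), Measure.isProbabilityMeasure_map (hX_meas n).aemeasurable⟩
  have hP : Tendsto P atTop (𝓝 ⟨μ, inferInstance⟩) := by
    refine ProbabilityMeasure.tendsto_iff_forall_integral_tendsto.2 fun f => ?_
    simpa only [P, ProbabilityMeasure.coe_mk,
      integral_map (hX_meas _).aemeasurable f.continuous.aestronglyMeasurable] using hX f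
  simpa only [P, ProbabilityMeasure.coe_mk, Measure.map_apply (hX_meas _) hs] using
    ProbabilityMeasure.tendsto_measure_of_null_frontier_of_tendsto' hP hμs

lemma natCast_sub_ceil_one_sub_mul {α : ℝ} (hα₀ : 0 ≤ α) (hα₁ : α ≤ 1) (w : ℕ) :
    ((w - ⌈(1 - α) * w⌉₊ : ℕ) : ℝ) = ⌊α * w⌋ := by
  have hceil : (⌈(1 - α) * w⌉₊ : ℤ) = w - ⌊α * w⌋ := by
    rw [Int.natCast_ceil_eq_ceil (by positivity),
      show (1 - α) * w = -(α * w) + ((w : ℤ) : ℝ) by push_cast; ring,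
      Int.ceil_add_intCast, Int.ceil_neg]
    ring
  rw [Nat.cast_sub (Nat.ceil_le.2 (by nlinarith [(w.cast_nonneg : (0 : ℝ) ≤ w)]))]
  have := congrArg (fun z : ℤ => (z : ℝ)) hceil
  push_cast at this
  linarith

theorem statement10_general
    {Ω : Type*} [MeasureSpace Ω] [IsProbabilityMeasure (ℙ : Measure Ω)]
    (w : ℕ) [NeZero w] (α : ℝ) (hα : α ∈ Set.Ico (0 : ℝ) 1)
    (T : ℕ → Ω → Fin w → ℝ) (hT_meas : ∀ n, Measurable (T n))
    (m : Measure ℝ) [IsProbabilityMeasure m]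
    (hm_atomless : ∀ x : ℝ, m {x} = 0)
    (hconv : ConvInDist T (Measure.pi fun _ : Fin w => m)) :
    Tendsto (fun n =>
        (ℙ {ω | T n ω 0 > orderStat (T n ω) ⌈(1 - α) * (w : ℝ)⌉₊}).toReal)
      atTop (nhds ((⌊α * (w : ℝ)⌋ : ℝ) / w)) := by
  have : NullSingletonClass m := ⟨hm_atomless⟩
  obtain ⟨hα₀, hα₁⟩ := hα
  have hw : (0 : ℝ) < w := by exact_mod_cast NeZero.pos w
  set k := ⌈(1 - α) * (w : ℝ)⌉₊
  have hk₁ : 1 ≤ k := Nat.one_le_ceil_iff.2 (by nlinarith)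
  have hkw : k ≤ w := Nat.ceil_le.2 (by nlinarith)
  have hlim := hconv.tendsto_measure_preimage hT_meas
    (isOpen_setOf_orderStat_lt hk₁ hkw 0).measurableSet
    (measure_mono_null (frontier_setOf_orderStat_lt_subset hk₁ hkw 0)
      (measure_pi_setOf_not_injective m))
  rw [measure_pi_setOf_orderStat_lt m hk₁ hkw 0] at hlim
  have hfin : ((w - k : ℕ) / w : ℝ≥0∞) ≠ ⊤ :=
    ENNReal.div_ne_top (ENNReal.natCast_ne_top _) (by simp [NeZero.ne w])
  convert (ENNReal.tendsto_toReal hfin).comp hlim using 2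
  · rfl
  rw [ENNReal.toReal_div, ENNReal.toReal_natCast, ENNReal.toReal_natCast,
    natCast_sub_ceil_one_sub_mul hα₀ hα₁.le]

/-- **Lemma A.1.** If the random vector `T^n = (T_1^n, ..., T_w^n)` converges in
distribution to a vector of i.i.d. variables with a common atomless law `m`, then
`P(T_1^n > T^n_{[1-α]}) → ⌊αw⌋/w`. -/
theorem statement10
    {Ω : Type*} [MeasureSpace Ω] [IsProbabilityMeasure (ℙ : Measure Ω)]
    (w : ℕ) [NeZero w] (hw : 2 ≤ w) (α : ℝ) (hα : α ∈ Set.Ico (0 : ℝ) 1)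
    (T : ℕ → Ω → Fin w → ℝ) (hT_meas : ∀ n, Measurable (T n))
    (m : Measure ℝ) [IsProbabilityMeasure m]
    (hm_atomless : ∀ x : ℝ, m {x} = 0)
    (hconv : ConvInDist T (Measure.pi fun _ : Fin w => m)) :
    Tendsto (fun n =>
        (ℙ {ω | T n ω 0 > orderStat (T n ω) ⌈(1 - α) * (w : ℝ)⌉₊}).toReal)
      atTop (nhds ((⌊α * (w : ℝ)⌋ : ℝ) / w)) :=
  statement10_general w α hα T hT_meas m hm_atomless hconv
end

section
/- (Monte Carlo testing principle.) Let T_1, ..., T_w be independent and identically distributed real random variables whose common distribution is atomless (continuous). Then for any α ∈ [0,1), P(T_1 > T_{(⌈(1−α)w⌉)}) = ⌊αw⌋/w. -/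
open MeasureTheory ProbabilityTheory Filter
open scoped ENNReal NNReal

open Finset Function

namespace Tuple

variable {ι α : Type*} [Fintype ι] [LinearOrder α]

noncomputable def rank (x : ι → α) (i : ι) : ℕ := #{j | x j < x i}

theorem rank_comp_perm (x : ι → α) (e : Equiv.Perm ι) (i : ι) :
    rank (x ∘ e) i = rank x (e i) :=
  card_equiv e fun j => by simp

variable {n : ℕ} {x : Fin n → α}

theorem strictMono_comp_sort (hx : Injective x) : StrictMono (x ∘ sort x) :=
  (monotone_sort x).strictMono_of_injective (hx.comp (sort x).injective)

theorem rank_eq_sort_symm (hx : Injective x) (i : Fin n) : rank x i = (sort x).symm i := by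
  rw [rank, ← Fin.card_Iio, card_equiv (sort x).symm (s := {j | x j < x i})]
  intro j
  simp only [mem_filter, mem_univ, true_and, mem_Iio]
  conv_lhs => rw [← (sort x).apply_symm_apply j, ← (sort x).apply_symm_apply i]
  exact (strictMono_comp_sort hx).lt_iff_lt

theorem card_filter_le_rank (hx : Injective x) {k : ℕ} (hk : k ≤ n) :
    #{i | k ≤ rank x i} = n - k := by
  have hcompl : #{i : Fin n | k ≤ i} + #{i : Fin n | (i : ℕ) < k} = n := by
    simpa [not_le] using card_filter_add_card_filter_not (s := univ) (p := fun i : Fin n => k ≤ i)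
  rw [Fin.card_filter_val_lt, min_eq_right hk] at hcompl
  rw [card_equiv (sort x).symm (t := {i : Fin n | k ≤ i}) fun i => by simp [rank_eq_sort_symm hx]]
  omega

end Tuple

theorem orderStat_lt_iff {n : ℕ} {x : Fin n → ℝ} (hx : Injective x) {k : ℕ} (hk₁ : 1 ≤ k)
    (hk : k ≤ n) (i : Fin n) : orderStat x k < x i ↔ k ≤ Tuple.rank x i := by
  have hlt : k - 1 < n := by omega
  rw [orderStat, dif_pos hlt, Tuple.rank_eq_sort_symm hx]
  conv_lhs => rw [← (Tuple.sort x).apply_symm_apply i]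
  refine ((Tuple.strictMono_comp_sort hx).lt_iff_lt (a := ⟨k - 1, hlt⟩)).trans ?_
  rw [Fin.lt_def, Fin.val_mk]
  omega

theorem natCast_sub_ceil_one_sub_mul_s16 {a : ℝ} (ha₀ : 0 ≤ a) (ha₁ : a ≤ 1) (n : ℕ) :
    ((n - ⌈(1 - a) * n⌉₊ : ℕ) : ℝ) = ⌊a * n⌋ := by
  have hnonneg : 0 ≤ (1 - a) * n := by nlinarith
  have hle : ⌈(1 - a) * n⌉₊ ≤ n := Nat.ceil_le.2 (by nlinarith)
  have hceil : (⌈(1 - a) * n⌉₊ : ℤ) = n - ⌊a * n⌋ := by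
    rw [Int.natCast_ceil_eq_ceil hnonneg,
      show (1 - a) * n = -(a * n) + ((n : ℤ) : ℝ) by push_cast; ring,
      Int.ceil_add_intCast, Int.ceil_neg]
    ring
  rw [← Int.cast_natCast, Nat.cast_sub hle, hceil]
  push_cast
  ring

section Measure

variable {Ω α : Type*} [MeasurableSpace Ω] {P : Measure Ω}

theorem ae_injective_of_pairwise {ι : Type*} [Countable ι] {X : ι → Ω → α}
    (h : Pairwise fun i j => P {ω | X i ω = X j ω} = 0) :
    ∀ᵐ ω ∂P, Injective fun i => X i ω := by
  have hne : ∀ i j, ∀ᵐ ω ∂P, X i ω = X j ω → i = j := fun i j => by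
    by_cases hij : i = j
    · exact .of_forall fun _ _ => hij
    · exact (measure_eq_zero_iff_ae_notMem.1 (h hij)).mono fun _ hω heq => (hω heq).elim
  filter_upwards [ae_all_iff.2 fun i => ae_all_iff.2 (hne i)] with ω hω i j
  exact hω i j

variable [MeasurableSpace α]

theorem ProbabilityTheory.IndepFun.measure_eq_eq_zero [IsFiniteMeasure P] [MeasurableEq α]
    {X Y : Ω → α} (hXY : IndepFun X Y P) (hX : Measurable X) (hY : Measurable Y)
    [NullSingletonClass (P.map X)] : P {ω | X ω = Y ω} = 0 := by
  have hdiag : MeasurableSet (Set.diagonal α) := measurableSet_diagonal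
  change P ((fun ω => (X ω, Y ω)) ⁻¹' Set.diagonal α) = 0
  rw [← Measure.map_apply (hX.prodMk hY) hdiag,
    (indepFun_iff_map_prod_eq_prod_map_map hX.aemeasurable hY.aemeasurable).1 hXY,
    Measure.prod_apply_symm hdiag]
  simp [Set.preimage, Set.diagonal]

theorem MeasureTheory.Measure.pi_map_comp_perm {ι : Type*} [Fintype ι] (μ : Measure α)
    [SigmaFinite μ] (e : Equiv.Perm ι) :
    (Measure.pi fun _ : ι => μ).map (· ∘ e) = Measure.pi fun _ => μ := by
  convert (measurePreserving_piCongrLeft (fun _ : ι => μ) e.symm).map_eq using 2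
  ext x i
  simp [MeasurableEquiv.piCongrLeft, Equiv.piCongrLeft]

section Exchangeable

variable [TopologicalSpace α] [LinearOrder α] [OrderClosedTopology α] [SecondCountableTopology α]
  [OpensMeasurableSpace α]

theorem Tuple.measurable_rank {ι : Type*} [Fintype ι] (i : ι) :
    Measurable fun x : ι → α => Tuple.rank x i := by
  simp_rw [Tuple.rank, card_filter]
  exact Finset.measurable_sum _ fun j _ =>
    Measurable.ite (measurableSet_lt (measurable_pi_apply j) (measurable_pi_apply i))
      measurable_const measurable_const

theorem mul_measure_le_rank_eq {n k : ℕ} {X : Ω → Fin n → α} (hX : Measurable X)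
    (hexch : ∀ e : Equiv.Perm (Fin n), P.map (fun ω => X ω ∘ e) = P.map X)
    (hinj : ∀ᵐ ω ∂P, Injective (X ω)) (hk : k ≤ n) (i : Fin n) :
    n * P {ω | k ≤ Tuple.rank (X ω) i} = (n - k : ℕ) * P Set.univ := by
  set E : Fin n → Set Ω := fun j => {ω | k ≤ Tuple.rank (X ω) j}
  have hA : MeasurableSet {x : Fin n → α | k ≤ Tuple.rank x i} :=
    measurableSet_le measurable_const (Tuple.measurable_rank i)
  have hE : ∀ j, MeasurableSet (E j) := fun j =>
    measurableSet_le measurable_const ((Tuple.measurable_rank j).comp hX)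
  have hE_eq : ∀ j, P (E j) = P (E i) := by
    intro j
    have hswap : E j = (fun ω => X ω ∘ Equiv.swap i j) ⁻¹' {x | k ≤ Tuple.rank x i} := by
      ext ω
      simp [E, Tuple.rank_comp_perm]
    have hXe : Measurable fun ω => X ω ∘ Equiv.swap i j :=
      measurable_pi_lambda _ fun m => (measurable_pi_apply _).comp hX
    rw [hswap, ← Measure.map_apply hXe hA, hexch, Measure.map_apply hX hA]
    rfl
  calc (n : ℝ≥0∞) * P (E i) = ∑ j, P (E j) := by simp [hE_eq]
    _ = ∫⁻ ω, ∑ j, (E j).indicator 1 ω ∂P := by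
      rw [lintegral_finsetSum _ fun j _ => measurable_one.indicator (hE j)]
      simp_rw [lintegral_indicator_one (hE _)]
    _ = ∫⁻ _, ((n - k : ℕ) : ℝ≥0∞) ∂P := by
      refine lintegral_congr_ae ?_
      filter_upwards [hinj] with ω hω
      simp only [Set.indicator_apply, Pi.one_apply, sum_boole]
      exact congrArg Nat.cast (Tuple.card_filter_le_rank hω hk)
    _ = _ := lintegral_const _

end Exchangeable

end Measure

theorem statement16_general
    {Ω : Type*} [MeasureSpace Ω] [IsProbabilityMeasure (ℙ : Measure Ω)]
    (w : ℕ) [NeZero w]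
    (T : Fin w → Ω → ℝ)
    (hT_meas : ∀ j, Measurable (T j))
    (hT_indep : iIndepFun T ℙ)
    (hT_ident : ∀ j, Measure.map (T j) ℙ = Measure.map (T 0) ℙ)
    (hT_atomless : ∀ x : ℝ, Measure.map (T 0) ℙ {x} = 0)
    (α : ℝ) (hα : α ∈ Set.Ico (0 : ℝ) 1) :
    (ℙ {ω | T 0 ω > orderStat (fun j : Fin w => T j ω) ⌈(1 - α) * (w : ℝ)⌉₊}).toReal =
      (⌊α * (w : ℝ)⌋ : ℝ) / w := by
  set k := ⌈(1 - α) * (w : ℝ)⌉₊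
  have hw : (0 : ℝ) < w := by exact_mod_cast Nat.pos_of_ne_zero (NeZero.ne w)
  have hk₁ : 1 ≤ k := Nat.one_le_ceil_iff.2 (by nlinarith [hα.2])
  have hk : k ≤ w := Nat.ceil_le.2 (by nlinarith [hα.1])
  set X : Ω → Fin w → ℝ := fun ω j => T j ω
  have hX : Measurable X := measurable_pi_lambda _ hT_meas
  have hlaw : Measure.map X ℙ = Measure.pi fun _ => Measure.map (T 0) ℙ := by
    rw [hT_indep.map_fun_eq_pi_map fun j => (hT_meas j).aemeasurable]
    simp_rw [hT_ident]
  have hexch (e : Equiv.Perm (Fin w)) : Measure.map (fun ω => X ω ∘ e) ℙ = Measure.map X ℙ := by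
    change Measure.map ((· ∘ e) ∘ X) ℙ = _
    rw [← Measure.map_map (measurable_pi_lambda (· ∘ e) fun j => measurable_pi_apply (e j)) hX, hlaw,
      Measure.pi_map_comp_perm]
  have hinj : ∀ᵐ ω ∂ℙ, Injective (X ω) := ae_injective_of_pairwise fun i j hij => by
    have : NullSingletonClass (Measure.map (T i) ℙ) := ⟨by simpa [hT_ident i] using hT_atomless⟩
    exact (hT_indep.indepFun hij).measure_eq_eq_zero (hT_meas i) (hT_meas j)
  have hevent : {ω | T 0 ω > orderStat (X ω) k} =ᵐ[ℙ] {ω | k ≤ Tuple.rank (X ω) 0} := by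
    filter_upwards [hinj] with ω hω
    exact propext (orderStat_lt_iff hω hk₁ hk 0)
  have hcount := mul_measure_le_rank_eq hX hexch hinj hk 0
  rw [measure_univ, mul_one] at hcount
  have hreal : (w : ℝ) * (ℙ {ω | k ≤ Tuple.rank (X ω) 0}).toReal = (w - k : ℕ) := by
    simpa only [ENNReal.toReal_mul, ENNReal.toReal_natCast] using congrArg ENNReal.toReal hcount
  rw [measure_congr hevent, eq_div_iff hw.ne', mul_comm, hreal,
    natCast_sub_ceil_one_sub_mul_s16 hα.1 hα.2.le]

/-- **Monte Carlo testing principle.** If `T_1, ..., T_w` are i.i.d. with an atomless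
common law, then `P(T_1 > T_{(⌈(1-α)w⌉)}) = ⌊αw⌋/w` for every `α ∈ [0,1)`. -/
theorem statement16
    {Ω : Type*} [MeasureSpace Ω] [IsProbabilityMeasure (ℙ : Measure Ω)]
    (w : ℕ) [NeZero w] (hw : 2 ≤ w)
    (T : Fin w → Ω → ℝ)
    (hT_meas : ∀ j, Measurable (T j))
    (hT_indep : iIndepFun T ℙ)
    (hT_ident : ∀ j, Measure.map (T j) ℙ = Measure.map (T 0) ℙ)
    (hT_atomless : ∀ x : ℝ, Measure.map (T 0) ℙ {x} = 0)
    (α : ℝ) (hα : α ∈ Set.Ico (0 : ℝ) 1) :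
    (ℙ {ω | T 0 ω > orderStat (fun j : Fin w => T j ω) ⌈(1 - α) * (w : ℝ)⌉₊}).toReal =
      (⌊α * (w : ℝ)⌋ : ℝ) / w :=
  statement16_general w T hT_meas hT_indep hT_ident hT_atomless α hα
end
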